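/- For every integer d ≥ 3, the function x ↦ [I₀(x/d)]^d e^{−x} is integrable on the interval (0, ∞); that is, the integral ∫₀^∞ [I₀(x/d)]^d e^{−x} dx is finite. -/

import Mathlib

/-!
Squaring the series of `I₀` (Cauchy product and Vandermonde's identity) gives
`I₀(y)² = ∑ₙ (C(2n,n)² / 16ⁿ) (2y)²ⁿ / (2n)!`. Since `(2n+1) C(2n,n)² ≤ 16ⁿ`, comparing term by
term with the series of `cosh 2y` and `sinh 2y` gives `(1 + y) I₀(y)² ≤ e^{2y}` for `y ≥ 0`.
The integrand is `(I₀(x/d) e^{-x/d})^d`, hence at most `(1 + x/d)^{-d/2}`, which is integrable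
once `d/2 > 1`.
-/

open MeasureTheory

/-- The modified Bessel function of the first kind of order zero,
`I₀(x) = ∑_{k ≥ 0} (x/2)^{2k} / (k!)²`. -/
noncomputable def besselI0 (x : ℝ) : ℝ :=
  ∑' k : ℕ, (x / 2) ^ (2 * k) / ((k.factorial : ℝ)) ^ 2

open Nat Real Finset

theorem Nat.two_mul_add_one_mul_centralBinom_sq_le (n : ℕ) :
    (2 * n + 1) * n.centralBinom ^ 2 ≤ 16 ^ n := by
  induction n with
  | zero => simp
  | succ n ih =>
    have hrec := succ_mul_centralBinom_succ n
    refine Nat.le_of_mul_le_mul_left ?_ (show 0 < (n + 1) ^ 2 by positivity)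
    calc (n + 1) ^ 2 * ((2 * (n + 1) + 1) * (n + 1).centralBinom ^ 2)
        = (2 * n + 3) * ((n + 1) * (n + 1).centralBinom) ^ 2 := by ring
      _ = 4 * ((2 * n + 3) * (2 * n + 1)) * ((2 * n + 1) * n.centralBinom ^ 2) := by
          rw [hrec]; ring
      _ ≤ 16 * (n + 1) ^ 2 * 16 ^ n := Nat.mul_le_mul (by nlinarith) ih
      _ = (n + 1) ^ 2 * 16 ^ (n + 1) := by ring

lemma factorial_two_mul_eq_centralBinom_mul_sq (n : ℕ) :
    ((2 * n) ! : ℝ) = n.centralBinom * (n ! : ℝ) ^ 2 := by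
  have h := add_choose_mul_factorial_mul_factorial n n
  rw [← two_mul] at h
  rw [sq, ← mul_assoc]
  exact_mod_cast h.symm

lemma besselI0_term_nonneg (y : ℝ) (k : ℕ) : 0 ≤ (y / 2) ^ (2 * k) / (k ! : ℝ) ^ 2 :=
  div_nonneg ((even_two_mul k).pow_nonneg _) (by positivity)

lemma summable_besselI0_term (y : ℝ) :
    Summable fun k : ℕ ↦ (y / 2) ^ (2 * k) / (k ! : ℝ) ^ 2 := by
  refine (summable_pow_div_factorial ((y / 2) ^ 2)).of_nonneg_of_le (besselI0_term_nonneg y)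
    fun k ↦ ?_
  rw [pow_mul]
  gcongr
  exact_mod_cast Nat.le_self_pow two_ne_zero _

lemma besselI0_nonneg (y : ℝ) : 0 ≤ besselI0 y :=
  tsum_nonneg (besselI0_term_nonneg y)

@[fun_prop]
lemma measurable_besselI0 : Measurable besselI0 :=
  Measurable.tsum fun k ↦ by fun_prop

lemma besselI0_term_mul_term (y : ℝ) {i j : ℕ} :
    (y / 2) ^ (2 * i) / (i ! : ℝ) ^ 2 * ((y / 2) ^ (2 * j) / (j ! : ℝ) ^ 2)
      = ((i + j).choose i : ℝ) ^ 2 * ((y / 2) ^ (2 * (i + j)) / ((i + j) ! : ℝ) ^ 2) := by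
  have h : ((i + j).choose i : ℝ) * i ! * j ! = (i + j) ! := by
    rw [choose_symm_add]; exact_mod_cast add_choose_mul_factorial_mul_factorial i j
  have hpos : ((i + j).choose i : ℝ) ≠ 0 := by
    exact_mod_cast (choose_pos (le_add_right i j)).ne'
  rw [← h, mul_add, pow_add]
  field_simp

lemma sum_antidiagonal_besselI0_term_mul_term (y : ℝ) (n : ℕ) :
    ∑ kl ∈ antidiagonal n,
        (y / 2) ^ (2 * kl.1) / (kl.1 ! : ℝ) ^ 2 * ((y / 2) ^ (2 * kl.2) / (kl.2 ! : ℝ) ^ 2)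
      = (n.centralBinom : ℝ) ^ 2 / 16 ^ n * ((2 * y) ^ (2 * n) / ((2 * n) ! : ℝ)) := by
  have hterm : ∀ kl ∈ antidiagonal n,
      (y / 2) ^ (2 * kl.1) / (kl.1 ! : ℝ) ^ 2 * ((y / 2) ^ (2 * kl.2) / (kl.2 ! : ℝ) ^ 2)
        = (n.choose kl.1 : ℝ) ^ 2 * ((y / 2) ^ (2 * n) / (n ! : ℝ) ^ 2) := by
    intro kl hkl
    rw [besselI0_term_mul_term, mem_antidiagonal.mp hkl]
  have hchoose : ∑ k ∈ range (n + 1), (n.choose k : ℝ) ^ 2 = n.centralBinom := by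
    rw [centralBinom_eq_two_mul_choose, ← sum_range_choose_sq]; push_cast; rfl
  have hpow : (2 * y) ^ (2 * n) = 16 ^ n * (y / 2) ^ (2 * n) := by
    rw [pow_mul, pow_mul, ← mul_pow]; congr 1; ring
  rw [sum_congr rfl hterm, ← sum_mul, Nat.sum_antidiagonal_eq_sum_range_succ_mk, hchoose,
    factorial_two_mul_eq_centralBinom_mul_sq, hpow]
  field_simp

lemma centralBinom_sq_div_sixteen_pow_le (n : ℕ) :
    (n.centralBinom : ℝ) ^ 2 / 16 ^ n ≤ 1 / (2 * n + 1) := by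
  rw [div_le_div_iff₀ (by positivity) (by positivity), one_mul, mul_comm]
  exact_mod_cast two_mul_add_one_mul_centralBinom_sq_le n

lemma hasSum_besselI0_sq (y : ℝ) :
    HasSum (fun n : ℕ ↦ (n.centralBinom : ℝ) ^ 2 / 16 ^ n * ((2 * y) ^ (2 * n) / ((2 * n) ! : ℝ)))
      (besselI0 y ^ 2) := by
  have hnorm : Summable fun k : ℕ ↦ ‖(y / 2) ^ (2 * k) / (k ! : ℝ) ^ 2‖ :=
    (summable_besselI0_term y).congr fun k ↦ (norm_of_nonneg (besselI0_term_nonneg y k)).symm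
  have hsum := (summable_norm_sum_mul_antidiagonal_of_summable_norm hnorm hnorm).of_norm
  have hprod := tsum_mul_tsum_eq_tsum_sum_antidiagonal_of_summable_norm hnorm hnorm
  simp only [sum_antidiagonal_besselI0_term_mul_term] at hsum hprod
  rw [sq, besselI0, hprod]
  exact hsum.hasSum

lemma besselI0_sq_le_cosh (y : ℝ) : besselI0 y ^ 2 ≤ cosh (2 * y) := by
  refine hasSum_le (fun n ↦ mul_le_of_le_one_left ?_ ?_) (hasSum_besselI0_sq y) (hasSum_cosh _)
  · exact div_nonneg ((even_two_mul n).pow_nonneg _) (by positivity)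
  · exact (centralBinom_sq_div_sixteen_pow_le n).trans
      (div_le_one_of_le₀ (by linarith) (by positivity))

lemma mul_besselI0_sq_le_sinh {y : ℝ} (hy : 0 ≤ y) : y * besselI0 y ^ 2 ≤ sinh (2 * y) := by
  refine hasSum_le (fun n ↦ ?_) ((hasSum_besselI0_sq y).mul_left y) (hasSum_sinh _)
  calc y * ((n.centralBinom : ℝ) ^ 2 / 16 ^ n * ((2 * y) ^ (2 * n) / ((2 * n) ! : ℝ)))
      ≤ y * (1 / (2 * n + 1) * ((2 * y) ^ (2 * n) / ((2 * n) ! : ℝ))) := by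
        gcongr ?_ * (?_ * _)
        exact centralBinom_sq_div_sixteen_pow_le n
    _ ≤ 2 * y * (1 / (2 * n + 1) * ((2 * y) ^ (2 * n) / ((2 * n) ! : ℝ))) := by
        gcongr; linarith
    _ = (2 * y) ^ (2 * n + 1) / ((2 * n + 1) ! : ℝ) := by
        rw [pow_succ, factorial_succ]; push_cast; field_simp

lemma one_add_mul_besselI0_sq_le_exp {y : ℝ} (hy : 0 ≤ y) :
    (1 + y) * besselI0 y ^ 2 ≤ exp (2 * y) := by
  rw [← cosh_add_sinh, add_mul, one_mul]
  exact add_le_add (besselI0_sq_le_cosh y) (mul_besselI0_sq_le_sinh hy)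

lemma besselI0_mul_exp_neg_sq_le {y : ℝ} (hy : 0 ≤ y) :
    (besselI0 y * exp (-y)) ^ 2 ≤ (1 + y)⁻¹ := by
  have hy1 : 0 < 1 + y := by linarith
  calc (besselI0 y * exp (-y)) ^ 2 = (1 + y) * besselI0 y ^ 2 * exp (-(2 * y)) / (1 + y) := by
        rw [mul_pow, ← exp_nat_mul]; field_simp; ring_nf
    _ ≤ exp (2 * y) * exp (-(2 * y)) / (1 + y) := by
        gcongr; exact one_add_mul_besselI0_sq_le_exp hy
    _ = (1 + y)⁻¹ := by rw [← exp_add, add_neg_cancel, exp_zero, one_div]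

lemma besselI0_mul_exp_neg_pow_le {y : ℝ} (hy : 0 ≤ y) (d : ℕ) :
    (besselI0 y * exp (-y)) ^ d ≤ (1 + y) ^ (-(d / 2 : ℝ)) := by
  have ht : 0 ≤ besselI0 y * exp (-y) := mul_nonneg (besselI0_nonneg y) (exp_pos _).le
  have hy1 : 0 < 1 + y := by linarith
  calc (besselI0 y * exp (-y)) ^ d = ((besselI0 y * exp (-y)) ^ 2) ^ (d / 2 : ℝ) := by
        rw [← rpow_natCast, ← rpow_natCast _ 2, ← rpow_mul ht]; ring_nf
    _ ≤ ((1 + y)⁻¹) ^ (d / 2 : ℝ) := by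
        gcongr; exact besselI0_mul_exp_neg_sq_le hy
    _ = (1 + y) ^ (-(d / 2 : ℝ)) := by rw [inv_rpow hy1.le, rpow_neg hy1.le]

/-- For every integer `d ≥ 3`, `x ↦ [I₀(x/d)]^d e^{-x}` is integrable on `(0, ∞)`. -/
theorem integrableOn_besselI0_pow_mul_exp (d : ℕ) (hd : 3 ≤ d) :
    IntegrableOn (fun x : ℝ => (besselI0 (x / d)) ^ d * Real.exp (-x)) (Set.Ioi 0) := by
  have hd0 : (d : ℝ) ≠ 0 := by exact_mod_cast (by omega : d ≠ 0)
  have hmajorant : Integrable fun x : ℝ ↦ (1 + ‖x / d‖) ^ (-(d / 2 : ℝ)) := by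
    refine (integrable_one_add_norm ?_).comp_div hd0
    rw [Module.finrank_self, Nat.cast_one, lt_div_iff₀ two_pos]
    exact_mod_cast (by omega : 1 * 2 < d)
  refine hmajorant.integrableOn.mono' (by fun_prop) ((ae_restrict_iff' measurableSet_Ioi).mpr
    (.of_forall fun x (hx : 0 < x) ↦ ?_))
  have hy : 0 ≤ x / d := by positivity
  have hrescale : besselI0 (x / d) ^ d * exp (-x) = (besselI0 (x / d) * exp (-(x / d))) ^ d := by
    rw [mul_pow, ← exp_nat_mul, mul_neg, mul_div_cancel₀ x hd0]
  rw [hrescale, norm_of_nonneg hy, norm_of_nonneg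
    (pow_nonneg (mul_nonneg (besselI0_nonneg _) (exp_pos _).le) d)]
  exact besselI0_mul_exp_neg_pow_le hy d
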